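/- For every heap x ∈ M and every nondecreasing sequence (xₙ)ₙ≥0 of heaps in M, if the least upper bound ⋁ₙ xₙ (taken in M̄) satisfies ⋁ₙ xₙ ≥ x, then there exists an integer n ≥ 0 with xₙ ≥ x. -/

import Mathlib

open MeasureTheory Filter
open scoped ENNReal NNReal

namespace HeapPaper

variable {S : Type}

/-- Commutation pairs of words, generating the trace congruence. -/
def CommRel (I : S → S → Prop) (w₁ w₂ : FreeMonoid S) : Prop :=
  ∃ a b : S, I a b ∧ w₁ = FreeMonoid.of a * FreeMonoid.of b ∧
    w₂ = FreeMonoid.of b * FreeMonoid.of a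

/-- The congruence on the free monoid generated by the commutation of independent pieces. -/
def HeapCon (I : S → S → Prop) : Con (FreeMonoid S) := conGen (CommRel I)

/-- The heap monoid `M(Σ, I)`:  the presented monoid `⟨Σ | ab = ba, (a,b) ∈ I⟩`. -/
def Heap (I : S → S → Prop) := (HeapCon I).Quotient

instance (I : S → S → Prop) : Monoid (Heap I) :=
  inferInstanceAs (Monoid (HeapCon I).Quotient)

/-- The unique additive extension to heaps of a function `φ` defined on pieces. -/
def addExt {A : Type} [AddCommMonoid A] {I : S → S → Prop} (φ : S → A) : Heap I → A :=
  fun x => Multiplicative.toAdd <|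
    (Con.lift (HeapCon I) (FreeMonoid.lift fun a => Multiplicative.ofAdd (φ a))
      (Con.conGen_le.mpr (by
        rintro w₁ w₂ ⟨a, b, hab, rfl, rfl⟩
        exact (Con.ker_rel _).mpr (by simp [map_mul, mul_comm])))) x

/-- The length `|x|` of a heap: the common length of its representative words. -/
def len {I : S → S → Prop} (x : Heap I) : ℕ := addExt (fun _ => 1) x

/-- The number `|x|ₐ` of occurrences of the piece `a` in the heap `x`. -/
def occ {I : S → S → Prop} [DecidableEq S] (a : S) (x : Heap I) : ℕ :=
  addExt (fun b => if b = a then 1 else 0) x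

/-- The additive extension `⟨φ, x⟩` of a real-valued cost function. -/
def pairing {I : S → S → Prop} (φ : S → ℝ) (x : Heap I) : ℝ := addExt φ x

/-- The left-divisibility order on the heap monoid. -/
def hLe {I : S → S → Prop} (x y : Heap I) : Prop := ∃ z : Heap I, y = x * z

/-- Cliques: finite sets of pairwise independent pieces. -/
def Cl (I : S → S → Prop) := {s : Finset S // ∀ a ∈ s, ∀ b ∈ s, a ≠ b → I a b}

/-- The empty clique. -/
def emptyCl (I : S → S → Prop) : Cl I := ⟨∅, by simp⟩

/-- The heap associated with a clique (product of its pieces, in any order). -/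
def Cl.heap {I : S → S → Prop} (γ : Cl I) : Heap I :=
  γ.1.noncommProd (fun a => (HeapCon I).mk' (FreeMonoid.of a)) (by
    intro a ha b hb hab
    have hI : I a b := γ.2 a ha b hb hab
    show (HeapCon I).mk' (FreeMonoid.of a) * (HeapCon I).mk' (FreeMonoid.of b)
        = (HeapCon I).mk' (FreeMonoid.of b) * (HeapCon I).mk' (FreeMonoid.of a)
    rw [← map_mul, ← map_mul]
    exact (Con.eq _).mpr (ConGen.Rel.of _ _ ⟨a, b, hI, rfl, rfl⟩))

/-- The Cartier–Foata move relation `γ → γ'` between cliques. -/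
def Move {I : S → S → Prop} (γ γ' : Cl I) : Prop :=
  ∀ b ∈ γ'.1, ∃ a ∈ γ.1, ¬ I a b

/-- The boundary `∂M`: infinite admissible sequences of nonempty cliques. -/
def Bnd (I : S → S → Prop) :=
  {ξ : ℕ → Cl I // (∀ n, (ξ n).1.Nonempty) ∧ ∀ n, Move (ξ n) (ξ (n + 1))}

/-- `M̄ = M ∪ ∂M`. -/
def MB (I : S → S → Prop) := Heap I ⊕ Bnd I

/-- Partial products of a sequence of cliques. -/
def ppSeq {I : S → S → Prop} (c : ℕ → Cl I) (n : ℕ) : Heap I :=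
  ((List.range n).map fun i => (c i).heap).prod

/-- `c` is the Cartier–Foata decomposition of the heap `x`, padded with empty cliques:
`c` is admissible, eventually empty, with partial products eventually equal to `x`. -/
def CFprop (I : S → S → Prop) (c : ℕ → Cl I) (x : Heap I) : Prop :=
  (∀ n, Move (c n) (c (n + 1))) ∧
    ∃ N, ∀ n, N ≤ n → ppSeq c n = x ∧ c n = emptyCl I

/-- The (padded) Cartier–Foata decomposition of a heap. -/
noncomputable def cf (I : S → S → Prop) (x : Heap I) : ℕ → Cl I :=
  letI := Classical.propDecidable (∃ c, CFprop I c x)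
  if h : ∃ c, CFprop I c x then h.choose else fun _ => emptyCl I

/-- The Cartier–Foata sequence of an element of `M̄`. -/
noncomputable def seqOf {I : S → S → Prop} : MB I → ℕ → Cl I
  | .inl x => cf I x
  | .inr ξ => ξ.1

/-- Partial products of the Cartier–Foata sequence of an element of `M̄`. -/
noncomputable def pp {I : S → S → Prop} (ζ : MB I) (n : ℕ) : Heap I :=
  ppSeq (seqOf ζ) n

/-- The order on `M̄`: `ξ ≤ ξ'` iff `γ₁⋯γₙ ≤ γ'₁⋯γ'ₙ` in `M` for all `n`. -/
noncomputable def mLe {I : S → S → Prop} (ζ ζ' : MB I) : Prop :=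
  ∀ n : ℕ, hLe (pp ζ n) (pp ζ' n)

/-- The elementary cylinder `↑x ⊆ ∂M` of base `x ∈ M`. -/
noncomputable def cyl {I : S → S → Prop} (x : Heap I) : Set (Bnd I) :=
  {ξ : Bnd I | mLe (.inl x) (.inr ξ)}

/-- The σ-algebra `𝔉` on `∂M` generated by the elementary cylinders. -/
noncomputable def Fsa (I : S → S → Prop) : MeasurableSpace (Bnd I) :=
  MeasurableSpace.generateFrom {A : Set (Bnd I) | ∃ x : Heap I, A = cyl x}

noncomputable instance (I : S → S → Prop) : MeasurableSpace (Bnd I) := Fsa I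

/-- `ζ` is the least upper bound in `M̄` of the nondecreasing sequence `(x·γ₁⋯γₙ)ₙ`,
where `(γₙ)` is the Cartier–Foata sequence of `ξ`; this characterizes `x·ξ`. -/
noncomputable def IsConc {I : S → S → Prop} (x : Heap I) (ξ : Bnd I) (ζ : MB I) : Prop :=
  (∀ n : ℕ, mLe (.inl (x * pp (.inr ξ) n)) ζ) ∧
    ∀ η : MB I, (∀ n : ℕ, mLe (.inl (x * pp (.inr ξ) n)) η) → mLe ζ η

/-- The concatenation `x·ξ ∈ ∂M` of a heap `x` and an infinite heap `ξ`. -/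
noncomputable def concB {I : S → S → Prop} (x : Heap I) (ξ : Bnd I) : Bnd I :=
  letI := Classical.propDecidable (∃ ζ : Bnd I, IsConc x ξ (.inr ζ))
  if h : ∃ ζ : Bnd I, IsConc x ξ (.inr ζ) then h.choose else ξ

/-- The difference `ξ − x`: the unique `ζ ∈ ∂M` with `x·ζ = ξ` (junk value if none exists). -/
noncomputable def subB {I : S → S → Prop} (ξ : Bnd I) (x : Heap I) : Bnd I :=
  letI := Classical.propDecidable (∃ ζ : Bnd I, concB x ζ = ξ)
  if h : ∃ ζ : Bnd I, concB x ζ = ξ then h.choose else ξ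

/-- Asynchronous stopping time. -/
noncomputable def IsAST {I : S → S → Prop} (V : Bnd I → MB I) : Prop :=
  (∀ ξ : Bnd I, mLe (V ξ) (.inr ξ)) ∧
    ∀ (ξ ξ' : Bnd I) (x : Heap I), V ξ = .inl x → mLe (.inl x) (.inr ξ') → V ξ' = V ξ

/-- The shift operator `θ_V` associated with an AST `V` (junk: identity outside its domain). -/
noncomputable def shiftV {I : S → S → Prop} (V : Bnd I → MB I) (ξ : Bnd I) : Bnd I :=
  match V ξ with
  | .inl x => subB ξ x
  | .inr _ => ξ

/-- The σ-algebra `𝔉_V` generated by the cylinders of the finite values of `V`. -/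
noncomputable def astSA {I : S → S → Prop} (V : Bnd I → MB I) : MeasurableSpace (Bnd I) :=
  MeasurableSpace.generateFrom
    {A : Set (Bnd I) | ∃ x : Heap I, (∃ ξ : Bnd I, V ξ = .inl x) ∧ A = cyl x}

/-- The iterated sequence `(Vₙ)ₙ` of an AST `V`:  `V₀ = 0` and
`V_{n+1}(ξ) = Vₙ(ξ)·V(ξ − Vₙ(ξ))` if `Vₙ(ξ) ∈ M`, `V_{n+1}(ξ) = ξ` otherwise. -/
noncomputable def iter {I : S → S → Prop} (V : Bnd I → MB I) : ℕ → Bnd I → MB I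
  | 0, _ => .inl 1
  | n + 1, ξ =>
    match iter V n ξ with
    | .inl x =>
      match V (subB ξ x) with
      | .inl y => .inl (x * y)
      | .inr ζ => .inr (concB x ζ)
    | .inr _ => .inr ξ

/-- The increment `Δ_{n+1} = V ∘ θ_{Vₙ}` (junk value outside the domain of `θ_{Vₙ}`). -/
noncomputable def Delta {I : S → S → Prop} (V : Bnd I → MB I) (n : ℕ) (ξ : Bnd I) : MB I :=
  match iter V n ξ with
  | .inl x => V (subB ξ x)
  | .inr _ => .inr ξ

/-- The length of an element of `M̄`, with `|ξ| = ∞` for `ξ ∈ ∂M`. -/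
noncomputable def lenE {I : S → S → Prop} : MB I → ℝ≥0∞
  | .inl x => (len x : ℝ≥0∞)
  | .inr _ => ⊤

/-- `E|V| < ∞`. -/
noncomputable def EVfin {I : S → S → Prop} (P : Measure (Bnd I)) (V : Bnd I → MB I) : Prop :=
  ∫⁻ ξ, lenE (V ξ) ∂P < ⊤

/-- The AST `V` is exhaustive: it is `ℙ`-a.s. finite and `ℙ`-a.s. `ξ = ⋁ₙ Vₙ(ξ)`
(`ξ` is the least upper bound of its iterates). -/
noncomputable def Exhaustive {I : S → S → Prop} (P : Measure (Bnd I)) (V : Bnd I → MB I) : Prop :=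
  (∀ᵐ ξ ∂P, ∃ x : Heap I, V ξ = .inl x) ∧
    ∀ᵐ ξ ∂P, (∀ n : ℕ, mLe (iter V n ξ) (.inr ξ)) ∧
      ∀ ζ : MB I, (∀ n : ℕ, mLe (iter V n ξ) ζ) → mLe (.inr ξ) ζ

/-- `ℙ` is a Bernoulli measure: a probability measure on `(∂M, 𝔉)` that is multiplicative
and positive on elementary cylinders. -/
noncomputable def IsBernoulli {I : S → S → Prop} (P : Measure (Bnd I)) : Prop :=
  IsProbabilityMeasure P ∧
    (∀ x y : Heap I, P (cyl (x * y)) = P (cyl x) * P (cyl y)) ∧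
    ∀ x : Heap I, 0 < P (cyl x)

/-- `ζ` is the greatest lower bound, within the complete lattice `L(ξ)`, of the set
`Hₐ(ξ)` of finite subheaps of `ξ` containing an occurrence of `a`:  this characterizes
the first hitting time of `a`. -/
noncomputable def IsHit {I : S → S → Prop} [DecidableEq S] (a : S) (ξ : Bnd I) (ζ : MB I) :
    Prop :=
  mLe ζ (.inr ξ) ∧
    (∀ x : Heap I, mLe (.inl x) (.inr ξ) → 0 < occ a x → mLe ζ (.inl x)) ∧
    ∀ η : MB I, mLe η (.inr ξ) →
      (∀ x : Heap I, mLe (.inl x) (.inr ξ) → 0 < occ a x → mLe η (.inl x)) → mLe η ζ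

/-- The first hitting time of the piece `a`. -/
noncomputable def hit {I : S → S → Prop} [DecidableEq S] (a : S) (ξ : Bnd I) : MB I :=
  letI := Classical.propDecidable (∃ ζ : MB I, IsHit a ξ ζ)
  if h : ∃ ζ : MB I, IsHit a ξ ζ then h.choose else .inr ξ

/-- A maximal clique: a maximal element of `(𝒞, ≤)`. -/
noncomputable def IsMaxCl {I : S → S → Prop} (γ : Cl I) : Prop :=
  ∀ δ : Cl I, hLe γ.heap δ.heap → δ.heap = γ.heap

/-- The AST cutting an infinite heap at the first occurrence of a maximal clique. -/
noncomputable def Vmax {I : S → S → Prop} (ξ : Bnd I) : MB I :=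
  letI := Classical.propDecidable
  if h : ∃ k : ℕ, IsMaxCl (ξ.1 k) then .inl (ppSeq ξ.1 (Nat.find h + 1)) else .inr ξ

/-- The ergodic mean `⟨φ, x⟩ / |x|` (junk value `0` on infinite heaps). -/
noncomputable def ratioC {I : S → S → Prop} (φ : S → ℝ) : MB I → ℝ
  | .inl x => pairing φ x / (len x : ℝ)
  | .inr _ => 0

/-- The ratio `φ(x)/|x|` for `φ` defined on heaps (junk value `0` on infinite heaps). -/
noncomputable def ratioH {I : S → S → Prop} (φ : Heap I → ℝ) : MB I → ℝ
  | .inl x => φ x / (len x : ℝ)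
  | .inr _ => 0

/-- The set `ℭ` of nonempty cliques. -/
def NCl (I : S → S → Prop) := {γ : Cl I // γ.1.Nonempty}

instance [Fintype S] (I : S → S → Prop) : Finite (Cl I) :=
  inferInstanceAs (Finite {s : Finset S // ∀ a ∈ s, ∀ b ∈ s, a ≠ b → I a b})

instance [Fintype S] (I : S → S → Prop) : Finite (NCl I) :=
  inferInstanceAs (Finite {γ : Cl I // γ.1.Nonempty})

/-- The valuation `f(x) = ℙ(↑x)` associated with `ℙ`. -/
noncomputable def fval {I : S → S → Prop} (P : Measure (Bnd I)) (x : Heap I) : ℝ :=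
  (P (cyl x)).toReal

open Classical in
/-- The Möbius transform `h` of the valuation `f` associated with `ℙ`. -/
noncomputable def mobius {I : S → S → Prop} (P : Measure (Bnd I)) (γ : Cl I) : ℝ :=
  ∑ᶠ γ' : Cl I,
    if hLe γ.heap γ'.heap then (-1 : ℝ) ^ (γ'.1.card - γ.1.card) * fval P γ'.heap else 0

open Classical in
/-- The normalization `g(γ) = Σ_{γ'∈ℭ, γ→γ'} h(γ')`. -/
noncomputable def gnorm {I : S → S → Prop} (P : Measure (Bnd I)) (γ : Cl I) : ℝ :=
  ∑ᶠ γ' : Cl I, if γ'.1.Nonempty ∧ Move γ γ' then mobius P γ' else 0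

open Classical in
/-- The transition matrix of the Markov chain of cliques. -/
noncomputable def Pmat {I : S → S → Prop} (P : Measure (Bnd I)) (γ γ' : Cl I) : ℝ :=
  if Move γ γ' then mobius P γ' / gnorm P γ else 0

/-- `π` is a stationary probability distribution, carried by the nonempty cliques, of the
Markov chain of cliques. -/
noncomputable def IsStationary {I : S → S → Prop} (P : Measure (Bnd I)) (π : Cl I → ℝ) :
    Prop :=
  (∀ γ : Cl I, 0 ≤ π γ) ∧ (π (emptyCl I) = 0) ∧ (∑ᶠ γ : Cl I, π γ = 1) ∧
    ∀ γ' : Cl I, π γ' = ∑ᶠ γ : Cl I, π γ * Pmat P γ γ'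

open Classical in
/-- The nonnegative matrix `B` on `ℭ×ℭ`: `B_{γ,γ'} = f(γ')` if `γ → γ'`, else `0`. -/
noncomputable def Bmat {I : S → S → Prop} (P : Measure (Bnd I)) :
    Matrix (NCl I) (NCl I) ℝ :=
  fun γ γ' => if Move γ.1 γ'.1 then fval P γ'.1.heap else 0

/-- The spectral radius of `B` (as a complex matrix). -/
noncomputable def specRadB [Fintype S] {I : S → S → Prop} (P : Measure (Bnd I)) : ℝ≥0∞ :=
  letI : Fintype (NCl I) := Fintype.ofFinite _
  letI : DecidableEq (NCl I) := Classical.decEq _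
  spectralRadius ℂ ((Bmat P).map (algebraMap ℝ ℂ))

/-- The height `τ(x)` of a heap: the number of cliques in its Cartier–Foata decomposition. -/
noncomputable def height {I : S → S → Prop} (x : Heap I) : ℕ :=
  sInf {N : ℕ | ∀ n, N ≤ n → cf I x n = emptyCl I}

/-- The ratio `|x|/τ(x)` (junk value `0` on infinite heaps). -/
noncomputable def speedRatio {I : S → S → Prop} : MB I → ℝ
  | .inl x => (len x : ℝ) / (height x : ℝ)
  | .inr _ => 0

/-- `ψ ∘ θ_V` extended by `0` outside the domain of `θ_V`. -/
noncomputable def extShift {I : S → S → Prop} (V : Bnd I → MB I) (ψ : Bnd I → ℝ)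
    (η : Bnd I) : ℝ :=
  match V η with
  | .inl _ => ψ (shiftV V η)
  | .inr _ => 0


/-!
Appending a piece `a` to a heap changes its Cartier–Foata decomposition only by adding `a` to a
single clique, the one just above the highest clique holding a piece dependent on `a`; all later
cliques commute with `a`. Hence along a nondecreasing sequence `uₙ` every Cartier–Foata clique
grows, and so does every prefix `γ₁⋯γₖ`. As `Σ` is finite, each clique eventually stabilises, and the
limiting cliques define an upper bound `b ∈ M̄` of the sequence (an infinite heap if they are all
nonempty, otherwise a heap with which `uₙ` eventually coincides) whose prefixes are eventually
prefixes of the `uₙ`. Then `x ≤ ⋁ uₙ ≤ b`, and the prefix of `b` of the height of `x` lies below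
some `uₙ`.
-/

section Pieces

variable {I : S → S → Prop}

def piece (I : S → S → Prop) (a : S) : Heap I := (HeapCon I).mk' (FreeMonoid.of a)

lemma piece_commute {a b : S} (h : I a b) : Commute (piece I a) (piece I b) :=
  (Con.eq _).mpr (ConGen.Rel.of _ _ ⟨a, b, h, rfl, rfl⟩)

@[elab_as_elim]
lemma Heap.induction_on {p : Heap I → Prop} (x : Heap I) (one : p 1)
    (piece_mul : ∀ a x, p x → p (piece I a * x)) : p x := by
  induction x using Con.induction_on with
  | H w =>
    induction w using FreeMonoid.inductionOn' with
    | one => exact one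
    | of_mul a w ih => exact piece_mul a _ ih

end Pieces

namespace Cl

variable {I : S → S → Prop}

lemma heap_commute {γ : Cl I} {a : S} (h : ∀ b ∈ γ.1, I a b) : Commute (piece I a) γ.heap :=
  Finset.noncommProd_commute _ _ _ _ fun b hb => piece_commute (h b hb)

lemma heap_emptyCl : (emptyCl I).heap = 1 := Finset.noncommProd_empty _ _

def insert [DecidableEq S] (γ : Cl I) (a : S) (h : ∀ b ∈ γ.1, I a b ∧ I b a) : Cl I :=
  ⟨Insert.insert a γ.1, by
    simp only [Finset.mem_insert]
    rintro x (rfl | hx) y (rfl | hy) hxy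
    exacts [absurd rfl hxy, (h y hy).1, (h x hx).2, γ.2 x hx y hy hxy]⟩

lemma heap_insert [DecidableEq S] (hirr : ∀ a : S, ¬ I a a) (γ : Cl I) (a : S)
    (h : ∀ b ∈ γ.1, I a b ∧ I b a) : (γ.insert a h).heap = γ.heap * piece I a :=
  Finset.noncommProd_insert_of_notMem' _ _ _ _ fun ha => hirr a (h a ha).1

end Cl

section Sequences

variable {I : S → S → Prop}

lemma ppSeq_succ (c : ℕ → Cl I) (n : ℕ) : ppSeq c (n + 1) = ppSeq c n * (c n).heap := by
  simp [ppSeq, List.range_succ]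

lemma ppSeq_congr {c d : ℕ → Cl I} {n : ℕ} (h : ∀ i < n, c i = d i) : ppSeq c n = ppSeq d n :=
  congrArg List.prod (List.map_congr_left fun i hi => by rw [h i (List.mem_range.1 hi)])

lemma ppSeq_dvd_ppSeq (c : ℕ → Cl I) {k n : ℕ} (h : k ≤ n) : ppSeq c k ∣ ppSeq c n := by
  induction n, h using Nat.le_induction with
  | base => rfl
  | succ n _ ih => exact ih.trans (ppSeq_succ c n ▸ dvd_mul_right _ _)

lemma ppSeq_eq_of_forall_eq_emptyCl {c : ℕ → Cl I} {k : ℕ}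
    (h : ∀ i, k ≤ i → c i = emptyCl I) {n : ℕ} (hn : k ≤ n) : ppSeq c n = ppSeq c k := by
  induction n, hn using Nat.le_induction with
  | base => rfl
  | succ n hn ih => rw [ppSeq_succ, h n hn, Cl.heap_emptyCl, mul_one, ih]

lemma Move.eq_emptyCl {γ : Cl I} (h : Move (emptyCl I) γ) : γ = emptyCl I :=
  Subtype.ext <| Finset.eq_empty_of_forall_notMem fun b hb => by
    obtain ⟨a, ha, -⟩ := h b hb
    exact Finset.notMem_empty a ha

lemma eq_emptyCl_of_le_of_eq_emptyCl {c : ℕ → Cl I} (hc : ∀ n, Move (c n) (c (n + 1))) {k : ℕ}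
    (hk : c k = emptyCl I) {n : ℕ} (hn : k ≤ n) : c n = emptyCl I := by
  induction n, hn using Nat.le_induction with
  | base => exact hk
  | succ n _ ih => exact Move.eq_emptyCl (ih ▸ hc n)

namespace CFprop

variable {c : ℕ → Cl I} {x : Heap I}

lemma ppSeq_dvd (hc : CFprop I c x) (k : ℕ) : ppSeq c k ∣ x := by
  obtain ⟨-, N, hN⟩ := hc
  exact (hN (max k N) (le_max_right _ _)).1 ▸ ppSeq_dvd_ppSeq c (le_max_left _ _)

lemma ppSeq_eq_of_eq_emptyCl (hc : CFprop I c x) {k : ℕ} (hk : c k = emptyCl I) :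
    ppSeq c k = x := by
  obtain ⟨hmove, N, hN⟩ := hc
  rw [← (hN (max k N) (le_max_right _ _)).1, ppSeq_eq_of_forall_eq_emptyCl
    (fun i hi => eq_emptyCl_of_le_of_eq_emptyCl hmove hk hi) (le_max_left _ _)]

end CFprop

end Sequences

section Insertion

variable {I : S → S → Prop}

lemma exists_insertion_level {c : ℕ → Cl I} {N : ℕ} (hN : ∀ n, N ≤ n → c n = emptyCl I)
    (a : S) : ∃ j ≤ N, (∀ i, j ≤ i → ∀ b ∈ (c i).1, I a b) ∧
      ∀ i, i + 1 = j → ∃ b ∈ (c i).1, ¬ I a b := by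
  classical
  have hNindep : ∀ i, N ≤ i → ∀ b ∈ (c i).1, I a b :=
    fun i hi b hb => absurd hb (by rw [hN i hi]; exact Finset.notMem_empty b)
  have hex : ∃ j, ∀ i, j ≤ i → ∀ b ∈ (c i).1, I a b := ⟨N, hNindep⟩
  refine ⟨Nat.find hex, Nat.find_min' hex hNindep, Nat.find_spec hex, fun i hi => ?_⟩
  obtain ⟨i', hii', b, hb, hab⟩ : ∃ i', i ≤ i' ∧ ∃ b ∈ (c i').1, ¬ I a b := by
    simpa using Nat.find_min hex (show i < Nat.find hex by omega)
  obtain rfl : i' = i := by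
    by_contra hne
    exact hab (Nat.find_spec hex i' (by omega) b hb)
  exact ⟨b, hb, hab⟩

section

variable [DecidableEq S] {c : ℕ → Cl I} {j : ℕ} {a : S} (hj : ∀ b ∈ (c j).1, I a b ∧ I b a)

def insertAt (c : ℕ → Cl I) (j : ℕ) (a : S) (hj : ∀ b ∈ (c j).1, I a b ∧ I b a) : ℕ → Cl I :=
  Function.update c j ((c j).insert a hj)

lemma subset_insertAt (k : ℕ) : (c k).1 ⊆ (insertAt c j a hj k).1 := by
  rcases eq_or_ne k j with rfl | hkj
  · rw [insertAt, Function.update_self]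
    exact Finset.subset_insert _ _
  · rw [insertAt, Function.update_of_ne hkj]

lemma ppSeq_insertAt_of_le {k : ℕ} (hk : k ≤ j) : ppSeq (insertAt c j a hj) k = ppSeq c k :=
  ppSeq_congr fun _ hi => Function.update_of_ne (by omega) _ _

lemma ppSeq_insertAt_of_lt (hirr : ∀ a : S, ¬ I a a)
    (hindep : ∀ i, j < i → ∀ b ∈ (c i).1, I a b) {k : ℕ} (hk : j < k) :
    ppSeq (insertAt c j a hj) k = ppSeq c k * piece I a := by
  induction k, hk using Nat.le_induction with
  | base =>
    rw [ppSeq_succ, ppSeq_succ, ppSeq_insertAt_of_le hj le_rfl, insertAt, Function.update_self,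
      Cl.heap_insert hirr, mul_assoc]
  | succ k hk ih =>
    rw [ppSeq_succ, ppSeq_succ, ih, insertAt, Function.update_of_ne (by omega), mul_assoc,
      mul_assoc, (Cl.heap_commute (hindep k hk)).eq]

lemma move_insertAt (hsymm : ∀ a b : S, I a b → I b a) (hmove : ∀ n, Move (c n) (c (n + 1)))
    (hdep : ∀ i, i + 1 = j → ∃ b ∈ (c i).1, ¬ I a b) (n : ℕ) :
    Move (insertAt c j a hj n) (insertAt c j a hj (n + 1)) := by
  rcases eq_or_ne (n + 1) j with rfl | hn1
  · rw [insertAt, Function.update_self, Function.update_of_ne (by omega)]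
    intro b hb
    rcases Finset.mem_insert.1 hb with rfl | hb
    · obtain ⟨b', hb', hab'⟩ := hdep n rfl
      exact ⟨b', hb', fun h => hab' (hsymm _ _ h)⟩
    · exact hmove n b hb
  · rw [insertAt, Function.update_of_ne hn1]
    rcases eq_or_ne n j with rfl | hnj
    · rw [Function.update_self]
      intro b hb
      obtain ⟨a', ha', hab⟩ := hmove n b hb
      exact ⟨a', Finset.mem_insert_of_mem ha', hab⟩
    · rw [Function.update_of_ne hnj]
      exact hmove n

end

lemma CFprop.exists_mul_piece (hsymm : ∀ a b : S, I a b → I b a) (hirr : ∀ a : S, ¬ I a a)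
    {c : ℕ → Cl I} {x : Heap I} (hc : CFprop I c x) (a : S) :
    ∃ c', CFprop I c' (x * piece I a) ∧ ∀ k, (c k).1 ⊆ (c' k).1 ∧ ppSeq c k ∣ ppSeq c' k := by
  classical
  obtain ⟨hmove, N, hN⟩ := hc
  obtain ⟨j, hjN, hindep, hdep⟩ := exists_insertion_level (fun n hn => (hN n hn).2) a
  have hj : ∀ b ∈ (c j).1, I a b ∧ I b a :=
    fun b hb => ⟨hindep j le_rfl b hb, hsymm _ _ (hindep j le_rfl b hb)⟩
  have hlt : ∀ k, j < k → ppSeq (insertAt c j a hj) k = ppSeq c k * piece I a :=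
    fun _ => ppSeq_insertAt_of_lt hj hirr fun i hi => hindep i hi.le
  refine ⟨insertAt c j a hj, ⟨move_insertAt hj hsymm hmove hdep, N + 1, fun n hn => ?_⟩,
    fun k => ⟨subset_insertAt hj k, ?_⟩⟩
  · rw [hlt n (by omega), (hN n (by omega)).1, insertAt, Function.update_of_ne (by omega)]
    exact ⟨rfl, (hN n (by omega)).2⟩
  · rcases le_or_gt k j with hkj | hkj
    · rw [ppSeq_insertAt_of_le hj hkj]
    · rw [hlt k hkj]
      exact dvd_mul_right _ _

end Insertion

section CartierFoata

variable {I : S → S → Prop} (hCF : ∀ x : Heap I, ∃! c : ℕ → Cl I, CFprop I c x)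
include hCF

lemma cfprop_cf (x : Heap I) : CFprop I (cf I x) x := by
  rw [cf, dif_pos (hCF x).exists]
  exact (hCF x).exists.choose_spec

lemma cf_eq_of_cfprop {c : ℕ → Cl I} {x : Heap I} (hc : CFprop I c x) : cf I x = c :=
  (hCF x).unique (cfprop_cf hCF x) hc

variable (hsymm : ∀ a b : S, I a b → I b a) (hirr : ∀ a : S, ¬ I a a)
include hsymm hirr

lemma cf_subset_cf_and_ppSeq_dvd_of_dvd {x y : Heap I} (h : x ∣ y) (k : ℕ) :
    (cf I x k).1 ⊆ (cf I y k).1 ∧ ppSeq (cf I x) k ∣ ppSeq (cf I y) k := by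
  obtain ⟨z, rfl⟩ := h
  induction z using Heap.induction_on generalizing x with
  | one => simp
  | piece_mul a z ih =>
    obtain ⟨c', hc', hcc'⟩ := (cfprop_cf hCF x).exists_mul_piece hsymm hirr a
    rw [← cf_eq_of_cfprop hCF hc'] at hcc'
    obtain ⟨hsub, hdvd⟩ := ih (x := x * piece I a)
    rw [← mul_assoc]
    exact ⟨(hcc' k).1.trans hsub, (hcc' k).2.trans hdvd⟩

end CartierFoata

section Limit

variable {I : S → S → Prop} {u : ℕ → Heap I}

def IsPrefixLimit (u : ℕ → Heap I) (b : MB I) : Prop :=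
  ∀ k, ∀ᶠ m in atTop, ppSeq (cf I (u m)) k = pp b k

lemma eventually_ppSeq_cf_eq {γ : ℕ → Cl I} (hγ : ∀ k, ∀ᶠ m in atTop, cf I (u m) k = γ k)
    (k : ℕ) : ∀ᶠ m in atTop, ppSeq (cf I (u m)) k = ppSeq γ k :=
  ((Set.finite_Iio k).eventually_all.2 fun i _ => hγ i).mono fun _ hm => ppSeq_congr hm

variable (hCF : ∀ x : Heap I, ∃! c : ℕ → Cl I, CFprop I c x)
  (hsymm : ∀ a b : S, I a b → I b a) (hirr : ∀ a : S, ¬ I a a)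
  (hu : ∀ n, hLe (u n) (u (n + 1)))
include hCF

-- `hLe x y` unfolds to `x ∣ y`, so the divisibility API applies to it.
lemma IsPrefixLimit.exists_dvd {b : MB I} (hb : IsPrefixLimit u b) {x : Heap I}
    (hxb : mLe (.inl x) b) : ∃ n, x ∣ u n := by
  obtain ⟨-, N, hN⟩ := cfprop_cf hCF x
  obtain ⟨m, hm⟩ := (hb N).exists
  have hx : x ∣ pp b N := (hN N le_rfl).1 ▸ hxb N
  exact ⟨m, hx.trans (hm ▸ (cfprop_cf hCF (u m)).ppSeq_dvd N)⟩

include hsymm hirr hu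

lemma IsPrefixLimit.mLe {b : MB I} (hb : IsPrefixLimit u b) (n : ℕ) :
    mLe (.inl (u n)) b := by
  intro k
  obtain ⟨m, hm, hnm⟩ := ((hb k).and (eventually_ge_atTop n)).exists
  rw [← hm]
  exact (cf_subset_cf_and_ppSeq_dvd_of_dvd hCF hsymm hirr
    (Nat.rel_of_forall_rel_succ_of_le (· ∣ ·) hu hnm) k).2

lemma exists_eventually_cf_eq [Finite S] (k : ℕ) :
    ∃ γ : Cl I, ∀ᶠ m in atTop, cf I (u m) k = γ := by
  have hmono : Monotone fun m => (cf I (u m) k).1 := fun n m hnm =>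
    (cf_subset_cf_and_ppSeq_dvd_of_dvd hCF hsymm hirr
      (Nat.rel_of_forall_rel_succ_of_le (· ∣ ·) hu hnm) k).1
  obtain ⟨n, hn⟩ := wellFoundedGT_iff_monotone_chain_condition.1 inferInstance ⟨_, hmono⟩
  exact ⟨cf I (u n) k, eventually_atTop.2 ⟨n, fun m hm => Subtype.ext (hn m hm).symm⟩⟩

lemma exists_isPrefixLimit [Finite S] : ∃ b, IsPrefixLimit u b := by
  choose γ hγ using exists_eventually_cf_eq hCF hsymm hirr hu
  by_cases hne : ∀ k, (γ k).1.Nonempty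
  · have hmove : ∀ k, Move (γ k) (γ (k + 1)) := fun k => by
      obtain ⟨m, h₀, h₁⟩ := ((hγ k).and (hγ (k + 1))).exists
      exact h₀ ▸ h₁ ▸ (cfprop_cf hCF (u m)).1 k
    exact ⟨.inr ⟨γ, hne, hmove⟩, eventually_ppSeq_cf_eq hγ⟩
  · obtain ⟨k, hk⟩ := not_forall.1 hne
    have hγk : γ k = emptyCl I := Subtype.ext (Finset.not_nonempty_iff_eq_empty.1 hk)
    have hconst : ∀ᶠ m in atTop, u m = ppSeq γ k :=
      ((hγ k).and (eventually_ppSeq_cf_eq hγ k)).mono fun m ⟨h₀, h₁⟩ =>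
        h₁ ▸ ((cfprop_cf hCF (u m)).ppSeq_eq_of_eq_emptyCl (h₀.trans hγk)).symm
    exact ⟨.inl (ppSeq γ k), fun k' => hconst.mono fun m hm => by rw [hm]; rfl⟩

end Limit

theorem finiteness_property_of_heaps_general
    {S : Type} [Fintype S] (I : S → S → Prop)
    (hsymm : ∀ a b : S, I a b → I b a)
    (hirr : ∀ a : S, ¬ I a a)
    (hCF : ∀ x : Heap I, ∃! c : ℕ → Cl I, CFprop I c x)
    (x : Heap I) (u : ℕ → Heap I) (hu : ∀ n : ℕ, hLe (u n) (u (n + 1)))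
    (s : MB I)
    (hleast : ∀ b : MB I, (∀ n : ℕ, mLe (Sum.inl (u n)) b) → mLe s b)
    (hxs : mLe (Sum.inl x) s) :
    ∃ n : ℕ, hLe x (u n) := by
  obtain ⟨b, hb⟩ := exists_isPrefixLimit hCF hsymm hirr hu
  have hsb : mLe s b := hleast b (hb.mLe hCF hsymm hirr hu)
  exact hb.exists_dvd hCF fun k => dvd_trans (hxs k) (hsb k)

theorem finiteness_property_of_heaps
    {S : Type} [Fintype S] [DecidableEq S] (I : S → S → Prop)
    (hsymm : ∀ a b : S, I a b → I b a)
    (hirr : ∀ a : S, ¬ I a a)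
    (hconn : ∀ a b : S, Relation.ReflTransGen (fun x y : S => x ≠ y ∧ ¬ I x y) a b)
    (hcard : 1 < Fintype.card S)
    (hCF : ∀ x : Heap I, ∃! c : ℕ → Cl I, CFprop I c x)
    (x : Heap I) (u : ℕ → Heap I) (hu : ∀ n : ℕ, hLe (u n) (u (n + 1)))
    (s : MB I)
    (hub : ∀ n : ℕ, mLe (Sum.inl (u n)) s)
    (hleast : ∀ b : MB I, (∀ n : ℕ, mLe (Sum.inl (u n)) b) → mLe s b)
    (hxs : mLe (Sum.inl x) s) :
    ∃ n : ℕ, hLe x (u n) :=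
  finiteness_property_of_heaps_general I hsymm hirr hCF x u hu s hleast hxs

end HeapPaper
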